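/- Let H' be an N × (2^N − 1) integer matrix with entries in {−1, 0, 1} whose reduction mod 2 is the parity-check matrix of the binary Hamming code (columns are all distinct nonzero binary N-strings). Then for every prime p, any two distinct columns of H' are linearly independent over Z/pZ, and no column is zero mod p; hence the p-ary code ker(H' mod p) has minimum distance at least 3. -/
import Mathlib


open Matrix

/-- Let `H'` be an `N × (2^N − 1)` integer matrix with entries in `{−1,0,1}` whose
reduction mod `2` is the parity-check matrix of the binary Hamming code (its columns are
all distinct nonzero binary `N`-strings).  Then for every prime `p`, no column of `H'` is
zero mod `p`, any two distinct columns are linearly independent over `ℤ/pℤ`, and hence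
the `p`-ary code `ker(H' mod p)` has minimum distance at least `3`. -/
theorem signed_hamming_min_distance (N : ℕ) (hN : 3 ≤ N)
    (H' : Matrix (Fin N) (Fin (2 ^ N - 1)) ℤ)
    (hEnt : ∀ i j, H' i j = -1 ∨ H' i j = 0 ∨ H' i j = 1)
    (hInj : Function.Injective
      (fun j : Fin (2 ^ N - 1) => fun i : Fin N => ((H' i j : ZMod 2))))
    (hNonzero : ∀ j : Fin (2 ^ N - 1), (fun i : Fin N => ((H' i j : ZMod 2))) ≠ 0)
    (p : ℕ) (hp : p.Prime) :
    (∀ j : Fin (2 ^ N - 1), (fun i : Fin N => ((H' i j : ZMod p))) ≠ 0) ∧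
    (∀ j₁ j₂ : Fin (2 ^ N - 1), j₁ ≠ j₂ →
      LinearIndependent (ZMod p)
        ![fun i : Fin N => ((H' i j₁ : ZMod p)), fun i : Fin N => ((H' i j₂ : ZMod p))]) ∧
    (∀ v : Fin (2 ^ N - 1) → ZMod p,
      (H'.map (Int.cast : ℤ → ZMod p)).mulVec v = 0 → v ≠ 0 → 3 ≤ hammingNorm v) := by
  haveI := Fact.mk hp
  set c : Fin (2 ^ N - 1) → Fin N → ZMod p := fun j i => ((H' i j : ZMod p)) with hc
  -- casting lemma
  have hzero : ∀ x : ℤ, (x = -1 ∨ x = 0 ∨ x = 1) → (((x : ZMod p) = 0) ↔ x = 0) := by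
    intro x hx
    rcases hx with h | h | h <;> subst h <;>
      simp [neg_eq_zero]
  -- columns nonzero mod p
  have hnz : ∀ j, c j ≠ 0 := by
    intro j h0
    apply hNonzero j
    funext i
    have h1 : H' i j = 0 := (hzero _ (hEnt i j)).1 (congrFun h0 i)
    simp [h1]
  -- equal supports give equal indices
  have hsupp : ∀ j₁ j₂ (lam : ZMod p), lam ≠ 0 → c j₁ = lam • c j₂ → j₁ = j₂ := by
    intro j₁ j₂ lam hlam heq
    apply hInj
    funext i
    have hi : c j₁ i = lam * c j₂ i := by
      have := congrFun heq i
      simpa using this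
    have e1 : H' i j₁ = 0 ↔ H' i j₂ = 0 := by
      rw [← hzero _ (hEnt i j₁), ← hzero _ (hEnt i j₂)]
      constructor
      · intro h
        have : lam * c j₂ i = 0 := by rw [← hi]; exact h
        rcases mul_eq_zero.1 this with h' | h'
        · exact absurd h' hlam
        · exact h'
      · intro h
        show c j₁ i = 0
        rw [hi]
        show lam * c j₂ i = 0
        rw [show c j₂ i = 0 from h, mul_zero]
    show ((H' i j₁ : ZMod 2)) = ((H' i j₂ : ZMod 2))
    rcases hEnt i j₁ with h1 | h1 | h1 <;> rcases hEnt i j₂ with h2 | h2 | h2 <;>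
      rw [h1, h2] <;> simp [h1, h2] at e1 ⊢ <;> decide
  have hli : ∀ j₁ j₂, j₁ ≠ j₂ → LinearIndependent (ZMod p) ![c j₁, c j₂] := by
    intro j₁ j₂ hne
    rw [linearIndependent_fin2]
    refine ⟨hnz j₂, fun a ha => ?_⟩
    by_cases h0 : a = 0
    · subst h0
      apply hnz j₁
      simpa using ha.symm
    · exact hne (hsupp j₁ j₂ a h0 ha.symm)
  refine ⟨hnz, hli, ?_⟩
  intro v hker hv0
  by_contra hlt
  push_neg at hlt
  set s : Finset (Fin (2 ^ N - 1)) := Finset.univ.filter (fun j => v j ≠ 0) with hs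
  have hcard : s.card ≤ 2 := by
    have : hammingNorm v = s.card := rfl
    omega
  have hmem : ∀ j, j ∈ s ↔ v j ≠ 0 := by
    intro j; simp [hs]
  have hsum : ∀ i, ∑ j ∈ s, (H' i j : ZMod p) * v j = 0 := by
    intro i
    have h1 : ∑ j, (H' i j : ZMod p) * v j = 0 := by
      have := congrFun hker i
      simpa [mulVec, dotProduct, Matrix.map_apply] using this
    rw [← h1]
    apply Finset.sum_subset (Finset.subset_univ s)
    intro j _ hj
    have : v j = 0 := by
      by_contra h
      exact hj ((hmem j).2 h)
    rw [this, mul_zero]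
  interval_cases h : s.card
  · -- v = 0
    apply hv0
    funext j
    by_contra h'
    have : j ∈ s := (hmem j).2 h'
    rw [Finset.card_eq_zero] at h
    simp [h] at this
  · -- one nonzero entry
    obtain ⟨j, hj⟩ := Finset.card_eq_one.1 h
    apply hnz j
    funext i
    have := hsum i
    rw [hj, Finset.sum_singleton] at this
    have hvj : v j ≠ 0 := (hmem j).1 (by rw [hj]; exact Finset.mem_singleton_self j)
    rcases mul_eq_zero.1 this with h' | h'
    · exact h'
    · exact absurd h' hvj
  · -- two nonzero entries
    obtain ⟨j₁, j₂, hne, hjs⟩ := Finset.card_eq_two.1 h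
    have hv1 : v j₁ ≠ 0 := (hmem j₁).1 (by rw [hjs]; simp)
    have heq : ∑ k : Fin 2, ![v j₁, v j₂] k • ![c j₁, c j₂] k = 0 := by
      funext i
      rw [Fin.sum_univ_two]
      have := hsum i
      rw [hjs, Finset.sum_insert (by simp [hne]), Finset.sum_singleton] at this
      simpa [mul_comm] using this
    have := Fintype.linearIndependent_iff.1 (hli j₁ j₂ hne) ![v j₁, v j₂] heq 0
    simp at this
    exact hv1 this
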